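/- Let d ≥ 2. There exists a constant C = C(d) > 0, independent of q, such that for every finite field F_q of odd characteristic, every non-degenerate quadratic form Q on F_q^d, every j ∈ F_q \ {0}, every subset E ⊆ S_j, and every z ∈ F_q^d, the number of pairs (x, y) ∈ E × E with x − y + z ∈ S_j is at most C ((#E)² q^{−1} + (#E) q^{(d−1)/2}). -/

import Mathlib

open Finset

/-- The non-degenerate quadratic surface `S_j = {x ∈ F^d : Q(x) = j}`,
where `Q(x) = ∑_{i,k} a i k * x i * x k`. -/
def Surf {F : Type} [Field F] [Fintype F] [DecidableEq F] {d : ℕ}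
    (a : Matrix (Fin d) (Fin d) F) (j : F) : Finset (Fin d → F) :=
  Finset.univ.filter fun x => (∑ i, ∑ k, a i k * x i * x k) = j

/-- The extension (inverse Fourier) transform `(f dσ)^∨(m) = (1/#S_j) ∑_{x ∈ S_j} χ(-x·m) f(x)`. -/
noncomputable def extFT {F : Type} [Field F] [Fintype F] [DecidableEq F] {d : ℕ}
    (a : Matrix (Fin d) (Fin d) F) (j : F) (χ : F → ℂ) (f : (Fin d → F) → ℂ)
    (m : Fin d → F) : ℂ :=
  ((Surf a j).card : ℂ)⁻¹ * ∑ x ∈ Surf a j, χ (-(∑ i, x i * m i)) * f x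

/-- `L^r` norm with counting measure on the frequency space `F^d`. -/
noncomputable def LrNorm {F : Type} [Fintype F] {d : ℕ}
    (r : ℝ) (g : (Fin d → F) → ℂ) : ℝ :=
  (∑ m : Fin d → F, ‖g m‖ ^ r) ^ (1 / r)

/-- `L^p` norm with normalized surface measure `dσ` on `S_j`. -/
noncomputable def LpNormS {F : Type} [Field F] [Fintype F] [DecidableEq F] {d : ℕ}
    (a : Matrix (Fin d) (Fin d) F) (j : F) (p : ℝ) (f : (Fin d → F) → ℂ) : ℝ :=
  (((Surf a j).card : ℝ)⁻¹ * ∑ x ∈ Surf a j, ‖f x‖ ^ p) ^ (1 / p)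

/-!
For `x ∈ S_j` the condition `Q(x - y + z) = j` is affine in `x`: it says
`⟪a (y - z), x⟫ = Q(y - z) / 2`. If `Q(y - z) ≠ 0` we count, for each `y`, the points of `E` on
this hyperplane; if `Q(y - z) = 0` the hyperplane passes through `0`, and we read the condition as
`y` lying on the hyperplane `⟪a x, ·⟫ = ⟪a x, z⟫` instead. Both counts are point–hyperplane
incidence problems. Summed over all `(a, b)`, the squared deviation of `#{x ∈ P | ⟪a, x⟫ = b}`
from its mean `#P / q` is exactly `(q - 1) #P q^(d-1)`, and the count is unchanged under
`(a, b) ↦ (l a, l b)`; so a family of hyperplanes that meets each such scaling class at most `k`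
times deviates in total by at most `√(k #family #P q^(d-1))` (Cauchy–Schwarz). Here `k = 1`, resp.
`k = 2` because `l x = l' x'` on `S_j` forces `l = ±l'`.
-/

open Matrix

lemma sum_comp_le_mul_sum_of_card_fiber_le {ι κ R : Type*} [Fintype κ] [DecidableEq κ]
    [Semiring R] [PartialOrder R] [IsOrderedRing R] (s : Finset ι) (g : ι → κ) {f : κ → R}
    (hf : ∀ p, 0 ≤ f p) {k : ℕ} (hk : ∀ p, #{i ∈ s | g i = p} ≤ k) :
    ∑ i ∈ s, f (g i) ≤ k * ∑ p, f p := by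
  rw [← sum_fiberwise s g, mul_sum]
  refine sum_le_sum fun p _ => ?_
  rw [sum_congr rfl fun i hi => congrArg f (mem_filter.mp hi).2, sum_const, nsmul_eq_mul]
  exact mul_le_mul_of_nonneg_right (Nat.mono_cast (hk p)) (hf p)

section Hyperplanes

variable {F n : Type*} [Field F] [DecidableEq F] [Fintype n]

def hyperplaneCount (P : Finset (n → F)) (a : n → F) (b : F) : ℕ := #{x ∈ P | a ⬝ᵥ x = b}

lemma hyperplaneCount_smul (P : Finset (n → F)) {l : F} (hl : l ≠ 0) (a : n → F) (b : F) :
    hyperplaneCount P (l • a) (l * b) = hyperplaneCount P a b := by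
  simp only [hyperplaneCount, smul_dotProduct, smul_eq_mul, mul_right_inj' hl]

variable [Fintype F]

lemma sum_hyperplaneCount (P : Finset (n → F)) (a : n → F) :
    ∑ b, hyperplaneCount P a b = #P :=
  (card_eq_sum_card_fiberwise fun x _ => mem_univ (a ⬝ᵥ x)).symm

lemma sum_hyperplaneCount_sq (P : Finset (n → F)) (a : n → F) :
    ∑ b, hyperplaneCount P a b ^ 2 = #{p ∈ P ×ˢ P | a ⬝ᵥ p.1 = a ⬝ᵥ p.2} := by
  rw [card_eq_sum_card_fiberwise (f := fun p => a ⬝ᵥ p.1) (t := univ) fun _ _ => mem_univ _]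
  refine sum_congr rfl fun b _ => ?_
  rw [sq, hyperplaneCount, ← card_product, ← filter_product, filter_filter]
  congr 1
  ext p
  simp only [mem_filter, mem_product]
  grind

variable [DecidableEq n]

lemma card_mul_card_dotProduct_eq_zero {v : n → F} (hv : v ≠ 0) :
    Fintype.card F * #{a : n → F | a ⬝ᵥ v = 0} = Fintype.card F ^ Fintype.card n := by
  obtain ⟨i, hi⟩ : ∃ i, v i ≠ 0 := Function.ne_iff.mp hv
  let f : (n → F) →+ F := AddMonoidHom.mk' (· ⬝ᵥ v) fun a b => add_dotProduct a b v
  have hf : ∀ c, c ∈ Set.range f := fun c =>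
    ⟨Pi.single i (c / v i), by simp [f, single_dotProduct, div_mul_cancel₀ c hi]⟩
  have hfiber : ∀ c : F, #{a | f a = c} = #{a | f a = 0} := fun c =>
    AddMonoidHom.card_fiber_eq_of_mem_range f (hf c) (hf 0)
  calc Fintype.card F * #{a : n → F | a ⬝ᵥ v = 0}
      = ∑ c : F, #{a | f a = c} := by
        rw [sum_congr rfl fun c _ => hfiber c, sum_const, card_univ, smul_eq_mul]; rfl
    _ = Fintype.card F ^ Fintype.card n := by
        rw [← card_eq_sum_card_fiberwise fun a _ => mem_univ (f a), card_univ, Fintype.card_fun]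

lemma card_dotProduct_eq_dotProduct (x y : n → F) :
    (#{a : n → F | a ⬝ᵥ x = a ⬝ᵥ y} : ℝ) =
      if x = y then (Fintype.card F : ℝ) ^ Fintype.card n
      else (Fintype.card F : ℝ) ^ Fintype.card n / Fintype.card F := by
  split_ifs with hxy
  · simp [hxy]
  · have h := card_mul_card_dotProduct_eq_zero (sub_ne_zero.mpr hxy)
    simp only [dotProduct_sub, sub_eq_zero] at h
    rw [eq_div_iff (by positivity), mul_comm]
    exact_mod_cast h

lemma sum_sum_hyperplaneCount_sq (P : Finset (n → F)) :
    ∑ a, ∑ b, (hyperplaneCount P a b : ℝ) ^ 2 =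
      #P * (Fintype.card F : ℝ) ^ Fintype.card n +
        (#P ^ 2 - #P) * ((Fintype.card F : ℝ) ^ Fintype.card n / Fintype.card F) := by
  set A := (Fintype.card F : ℝ) ^ Fintype.card n
  set B := A / Fintype.card F
  have hrow : ∀ x ∈ P, ∑ y ∈ P, (#{a : n → F | a ⬝ᵥ x = a ⬝ᵥ y} : ℝ) = #P * B + (A - B) := by
    intro x hx
    calc ∑ y ∈ P, (#{a : n → F | a ⬝ᵥ x = a ⬝ᵥ y} : ℝ)
        = ∑ y ∈ P, (B + if x = y then A - B else 0) := by
          refine sum_congr rfl fun y _ => ?_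
          rw [card_dotProduct_eq_dotProduct]
          split_ifs <;> ring
      _ = #P * B + (A - B) := by
          rw [sum_add_distrib, sum_const, sum_ite_eq, if_pos hx, nsmul_eq_mul]
  have hswap : ∑ a : n → F, #{p ∈ P ×ˢ P | a ⬝ᵥ p.1 = a ⬝ᵥ p.2} =
      ∑ p ∈ P ×ˢ P, #{a : n → F | a ⬝ᵥ p.1 = a ⬝ᵥ p.2} :=
    sum_card_bipartiteAbove_eq_sum_card_bipartiteBelow _
  calc ∑ a, ∑ b, (hyperplaneCount P a b : ℝ) ^ 2
      = ∑ x ∈ P, ∑ y ∈ P, (#{a : n → F | a ⬝ᵥ x = a ⬝ᵥ y} : ℝ) := by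
        simp only [← Nat.cast_pow, ← Nat.cast_sum, sum_hyperplaneCount_sq, hswap, sum_product]
    _ = #P * A + (#P ^ 2 - #P) * B := by
        rw [sum_congr rfl hrow, sum_const, nsmul_eq_mul]
        ring

lemma sum_sum_sq_hyperplaneCount_sub_mean (P : Finset (n → F)) :
    ∑ a, ∑ b, ((hyperplaneCount P a b : ℝ) - #P / Fintype.card F) ^ 2 =
      (Fintype.card F - 1) * #P * (Fintype.card F : ℝ) ^ Fintype.card n / Fintype.card F := by
  set q : ℝ := (Fintype.card F : ℝ)
  have hq : q ≠ 0 := by positivity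
  have hrow : ∀ a : n → F, ∑ b, ((hyperplaneCount P a b : ℝ) - #P / q) ^ 2 =
      ∑ b, (hyperplaneCount P a b : ℝ) ^ 2 - #P ^ 2 / q := by
    intro a
    have hsum : ∑ b, (hyperplaneCount P a b : ℝ) = #P := by
      exact_mod_cast sum_hyperplaneCount P a
    simp only [sub_sq, sum_add_distrib, sum_sub_distrib, ← sum_mul, ← mul_sum, hsum, sum_const,
      card_univ, nsmul_eq_mul]
    field_simp
    ring
  simp only [hrow, sum_sub_distrib, sum_sum_hyperplaneCount_sq, sum_const, card_univ,
    Fintype.card_fun, nsmul_eq_mul]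
  push_cast
  field_simp
  ring

/-- `hk`: up to scaling `(a, b) ↦ (l • a, l * b)`, each hyperplane occurs at most `k` times in
the family `(A i, B i)`. -/
theorem sum_hyperplaneCount_le {ι : Type*} (P : Finset (n → F)) (s : Finset ι)
    (A : ι → n → F) (B : ι → F) {k : ℕ}
    (hk : ∀ p : (n → F) × F,
      #{il ∈ s ×ˢ (univ : Finset Fˣ) | ((il.2 : F) • A il.1, (il.2 : F) * B il.1) = p} ≤ k) :
    ∑ i ∈ s, (hyperplaneCount P (A i) (B i) : ℝ) ≤
      #s * #P / Fintype.card F +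
        √(k * #s * #P * ((Fintype.card F : ℝ) ^ Fintype.card n / Fintype.card F)) := by
  set q : ℝ := (Fintype.card F : ℝ)
  set X : ℝ := q ^ Fintype.card n / q
  set dev : (n → F) × F → ℝ := fun p => hyperplaneCount P p.1 p.2 - #P / q
  have hq : 1 < q := Nat.one_lt_cast.mpr Fintype.one_lt_card
  have hunits : (Fintype.card Fˣ : ℝ) = q - 1 := by
    rw [Fintype.card_units, Nat.cast_sub Fintype.card_pos, Nat.cast_one]
  have hvar : ∑ i ∈ s, dev (A i, B i) ^ 2 ≤ k * #P * X := by
    refine le_of_mul_le_mul_left ?_ (sub_pos.mpr hq)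
    calc (q - 1) * ∑ i ∈ s, dev (A i, B i) ^ 2
        = ∑ il ∈ s ×ˢ (univ : Finset Fˣ),
            dev ((il.2 : F) • A il.1, (il.2 : F) * B il.1) ^ 2 := by
          simp only [sum_product, dev, hyperplaneCount_smul P (Units.ne_zero _), sum_const,
            card_univ, nsmul_eq_mul, hunits, mul_sum]
      _ ≤ k * ∑ p, dev p ^ 2 :=
          sum_comp_le_mul_sum_of_card_fiber_le _ _ (fun p => sq_nonneg _) hk
      _ = (q - 1) * (k * #P * X) := by
          rw [Fintype.sum_prod_type, sum_sum_sq_hyperplaneCount_sub_mean]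
          ring
  have hdev : ∑ i ∈ s, dev (A i, B i) ≤ √(k * #s * #P * X) := by
    refine (le_abs_self _).trans (Real.abs_le_sqrt ?_)
    calc (∑ i ∈ s, dev (A i, B i)) ^ 2 ≤ #s * ∑ i ∈ s, dev (A i, B i) ^ 2 :=
          sq_sum_le_card_mul_sum_sq
      _ ≤ #s * (k * #P * X) := by gcongr
      _ = k * #s * #P * X := by ring
  calc ∑ i ∈ s, (hyperplaneCount P (A i) (B i) : ℝ)
      = #s * #P / q + ∑ i ∈ s, dev (A i, B i) := by
        simp only [dev, sum_sub_distrib, sum_const, nsmul_eq_mul]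
        ring
    _ ≤ #s * #P / q + √(k * #s * #P * X) := by gcongr

end Hyperplanes

section QuadraticForm

variable {R n : Type*} [CommRing R] [Fintype n] {a : Matrix n n R}

def quadForm (a : Matrix n n R) (x : n → R) : R := x ⬝ᵥ a *ᵥ x

lemma quadForm_smul (a : Matrix n n R) (c : R) (x : n → R) :
    quadForm a (c • x) = c ^ 2 * quadForm a x := by
  simp only [quadForm, mulVec_smul, smul_dotProduct, dotProduct_smul, smul_eq_mul]
  ring

lemma Matrix.IsSymm.mulVec_dotProduct_comm (ha : a.IsSymm) (x w : n → R) :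
    a *ᵥ w ⬝ᵥ x = a *ᵥ x ⬝ᵥ w := by
  rw [dotProduct_comm, dotProduct_mulVec, ← vecMul_transpose, ha.eq]

lemma quadForm_sub (ha : a.IsSymm) (x w : n → R) :
    quadForm a (x - w) = quadForm a x - 2 * (a *ᵥ w ⬝ᵥ x) + quadForm a w := by
  have hcross : w ⬝ᵥ a *ᵥ x = a *ᵥ w ⬝ᵥ x := by
    rw [dotProduct_comm, ha.mulVec_dotProduct_comm]
  simp only [quadForm, mulVec_sub, sub_dotProduct, dotProduct_sub, hcross,
    dotProduct_comm x (a *ᵥ w)]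
  ring

end QuadraticForm

lemma mem_Surf_iff {F : Type} [Field F] [Fintype F] [DecidableEq F] {d : ℕ}
    {a : Matrix (Fin d) (Fin d) F} {j : F} {x : Fin d → F} :
    x ∈ Surf a j ↔ quadForm a x = j := by
  have : ∑ i, ∑ k, a i k * x i * x k = quadForm a x := by
    simp only [quadForm, dotProduct, mulVec, mul_sum]
    exact sum_congr rfl fun i _ => sum_congr rfl fun k _ => by ring
  simp [Surf, this]

section Incidences

variable {F n : Type*} [Field F] [Fintype n] {a : Matrix n n F}

lemma quadForm_sub_eq_iff (ha : a.IsSymm) (h2 : (2 : F) ≠ 0) {j : F} {x : n → F}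
    (hx : quadForm a x = j) (w : n → F) :
    quadForm a (x - w) = j ↔ a *ᵥ w ⬝ᵥ x = quadForm a w / 2 := by
  rw [quadForm_sub ha, hx, eq_div_iff h2]
  constructor <;> intro h <;> linear_combination -h

variable [DecidableEq F]

lemma card_incidences_eq (ha : a.IsSymm) (h2 : (2 : F) ≠ 0) {j : F} {E : Finset (n → F)}
    (hE : ∀ x ∈ E, quadForm a x = j) (z : n → F) :
    #{pr ∈ E ×ˢ E | quadForm a (pr.1 - pr.2 + z) = j} =
      ∑ y ∈ E with quadForm a (y - z) ≠ 0,
          hyperplaneCount E (a *ᵥ (y - z)) (quadForm a (y - z) / 2) +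
        ∑ x ∈ E, hyperplaneCount {y ∈ E | quadForm a (y - z) = 0} (a *ᵥ x) (a *ᵥ x ⬝ᵥ z) := by
  have hcond : ∀ x ∈ E, ∀ y, quadForm a (x - y + z) = j ↔
      a *ᵥ (y - z) ⬝ᵥ x = quadForm a (y - z) / 2 := fun x hx y => by
    rw [← quadForm_sub_eq_iff ha h2 (hE x hx), sub_add]
  have hrows : #{pr ∈ E ×ˢ E | quadForm a (pr.1 - pr.2 + z) = j} =
      ∑ y ∈ E, #{x ∈ E | quadForm a (x - y + z) = j} := by
    rw [card_filter, sum_product_right]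
    simp only [← card_filter]
  have hswap : ∀ y ∈ E, quadForm a (y - z) = 0 → ∀ x ∈ E,
      quadForm a (x - y + z) = j ↔ a *ᵥ x ⬝ᵥ y = a *ᵥ x ⬝ᵥ z := fun y _ hy x hx => by
    rw [hcond x hx, hy, zero_div, ha.mulVec_dotProduct_comm, dotProduct_sub, sub_eq_zero]
  rw [hrows, ← sum_filter_not_add_sum_filter E fun y => quadForm a (y - z) = 0]
  congr 1
  · exact sum_congr rfl fun y _ => congrArg card (filter_congr fun x hx => hcond x hx y)
  · calc ∑ y ∈ E with quadForm a (y - z) = 0, #{x ∈ E | quadForm a (x - y + z) = j}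
        = ∑ y ∈ E with quadForm a (y - z) = 0, #{x ∈ E | a *ᵥ x ⬝ᵥ y = a *ᵥ x ⬝ᵥ z} :=
          sum_congr rfl fun y hy => congrArg card <|
            filter_congr (hswap y (mem_filter.mp hy).1 (mem_filter.mp hy).2)
      _ = _ := (sum_card_bipartiteAbove_eq_sum_card_bipartiteBelow _).symm

variable [Fintype F]

lemma card_filter_le_one_of_quadForm_ne_zero (hinj : Function.Injective a.mulVec)
    (h2 : (2 : F) ≠ 0) (z : n → F) {s : Finset (n → F)} (hs : ∀ y ∈ s, quadForm a (y - z) ≠ 0)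
    (p : (n → F) × F) :
    #{yl ∈ s ×ˢ (univ : Finset Fˣ) |
      ((yl.2 : F) • a *ᵥ (yl.1 - z), (yl.2 : F) * (quadForm a (yl.1 - z) / 2)) = p} ≤ 1 := by
  rw [card_le_one]
  rintro ⟨y, l⟩ hyl ⟨y', l'⟩ hyl'
  simp only [mem_filter, mem_product, mem_univ, and_true] at hyl hyl'
  obtain ⟨hy, hp⟩ := hyl
  obtain ⟨hy', rfl⟩ := hyl'
  obtain ⟨hnormal, hconst⟩ := Prod.mk.inj hp
  rw [← mul_div_assoc, ← mul_div_assoc, div_left_inj' h2] at hconst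
  have hw : (l : F) • (y - z) = (l' : F) • (y' - z) := hinj (by rwa [mulVec_smul, mulVec_smul])
  have hQ := congrArg (quadForm a) hw
  rw [quadForm_smul, quadForm_smul] at hQ
  have hl : l = l' := Units.ext <| mul_right_cancel₀ (mul_ne_zero l'.ne_zero (hs y' hy')) <| by
    linear_combination hQ - (l : F) * hconst
  subst hl
  rw [smul_right_injective _ l.ne_zero hw |> sub_left_inj.mp]

lemma card_filter_le_two_of_quadForm_eq (hinj : Function.Injective a.mulVec) {j : F} (hj : j ≠ 0)
    {s : Finset (n → F)} (hs : ∀ x ∈ s, quadForm a x = j) (z : n → F) (p : (n → F) × F) :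
    #{xl ∈ s ×ˢ (univ : Finset Fˣ) |
      ((xl.2 : F) • a *ᵥ xl.1, (xl.2 : F) * (a *ᵥ xl.1 ⬝ᵥ z)) = p} ≤ 2 := by
  set T := {xl ∈ s ×ˢ (univ : Finset Fˣ) |
      ((xl.2 : F) • a *ᵥ xl.1, (xl.2 : F) * (a *ᵥ xl.1 ⬝ᵥ z)) = p}
  rcases T.eq_empty_or_nonempty with hT | ⟨⟨x₀, l₀⟩, h₀⟩
  · simp [hT]
  refine (card_le_card fun ⟨x, l⟩ hxl => ?_).trans
    (card_le_two (a := (x₀, l₀)) (b := (-x₀, -l₀)))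
  simp only [T, mem_filter, mem_product, mem_univ, and_true] at h₀ hxl
  have hx : (l : F) • x = (l₀ : F) • x₀ :=
    hinj (by rw [mulVec_smul, mulVec_smul]; exact (Prod.mk.inj (hxl.2.trans h₀.2.symm)).1)
  have hQ := congrArg (quadForm a) hx
  rw [quadForm_smul, quadForm_smul, hs x hxl.1, hs x₀ h₀.1] at hQ
  rcases sq_eq_sq_iff_eq_or_eq_neg.mp (mul_right_cancel₀ hj hQ) with hl | hl
  · obtain rfl : l = l₀ := Units.ext hl
    rw [smul_right_injective _ l.ne_zero hx]
    exact mem_insert_self _ _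
  · obtain rfl : l = -l₀ := Units.ext hl
    have : (l₀ : F) • -x = (l₀ : F) • x₀ := by rw [smul_neg, ← neg_smul, ← Units.val_neg, hx]
    rw [← neg_eq_iff_eq_neg.mp (smul_right_injective _ l₀.ne_zero this)]
    exact mem_insert_of_mem (mem_singleton_self _)

lemma mul_div_add_sqrt_le {a b m q X : ℝ} {k : ℕ} (ha : 0 ≤ a) (hb : 0 ≤ b) (ham : a ≤ m)
    (hbm : b ≤ m) (hq : 0 ≤ q) (hX : 0 ≤ X) :
    a * b / q + √(k * a * b * X) ≤ m ^ 2 / q + k * (m * √X) := by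
  have hab : a * b ≤ m ^ 2 := by nlinarith
  have hm : 0 ≤ m := ha.trans ham
  have hk : (k : ℝ) ≤ k ^ 2 := by exact_mod_cast Nat.le_self_pow two_ne_zero k
  refine add_le_add (by gcongr) ?_
  calc √(k * a * b * X) ≤ √((k * m) ^ 2 * X) := by
        gcongr
        rw [mul_assoc, mul_pow]
        exact mul_le_mul hk hab (by positivity) (by positivity)
    _ = k * (m * √X) := by
        rw [Real.sqrt_mul (sq_nonneg _), Real.sqrt_sq (by positivity), mul_assoc]

lemma card_incidences_le [DecidableEq n] (ha : a.IsSymm) (hinj : Function.Injective a.mulVec)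
    (h2 : (2 : F) ≠ 0) {j : F} (hj : j ≠ 0) {E : Finset (n → F)}
    (hE : ∀ x ∈ E, quadForm a x = j) (z : n → F) :
    (#{pr ∈ E ×ˢ E | quadForm a (pr.1 - pr.2 + z) = j} : ℝ) ≤
      2 * (#E ^ 2 / Fintype.card F) +
        3 * (#E * √((Fintype.card F : ℝ) ^ Fintype.card n / Fintype.card F)) := by
  have hq : (0 : ℝ) ≤ Fintype.card F := by positivity
  have hX : (0 : ℝ) ≤ (Fintype.card F : ℝ) ^ Fintype.card n / Fintype.card F := by positivity
  have h₁ := (sum_hyperplaneCount_le E {y ∈ E | quadForm a (y - z) ≠ 0}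
    (fun y => a *ᵥ (y - z)) (fun y => quadForm a (y - z) / 2)
    (card_filter_le_one_of_quadForm_ne_zero hinj h2 z fun y hy => (mem_filter.mp hy).2)).trans
    (mul_div_add_sqrt_le (by positivity) (by positivity)
      (by exact_mod_cast card_filter_le _ _) le_rfl hq hX)
  have h₂ := (sum_hyperplaneCount_le {y ∈ E | quadForm a (y - z) = 0} E
    (fun x => a *ᵥ x) (fun x => a *ᵥ x ⬝ᵥ z)
    (card_filter_le_two_of_quadForm_eq hinj hj hE z)).trans
    (mul_div_add_sqrt_le (by positivity) (by positivity)
      le_rfl (by exact_mod_cast card_filter_le _ _) hq hX)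
  rw [card_incidences_eq ha h2 hE z]
  push_cast at h₁ h₂ ⊢
  linarith

end Incidences

theorem stmt16_general (d : ℕ) :
    ∃ C : ℝ, 0 < C ∧
      ∀ (F : Type) [Field F] [Fintype F] [DecidableEq F],
        Odd (ringChar F) →
        ∀ a : Matrix (Fin d) (Fin d) F, (∀ i k, a i k = a k i) → a.det ≠ 0 →
        ∀ j : F, j ≠ 0 →
        ∀ E : Finset (Fin d → F), E ⊆ Surf a j →
        ∀ z : Fin d → F,
          (((E ×ˢ E).filter (fun pr => pr.1 - pr.2 + z ∈ Surf a j)).card : ℝ)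
            ≤ C * ((E.card : ℝ) ^ 2 * (Fintype.card F : ℝ)⁻¹ +
                (E.card : ℝ) * (Fintype.card F : ℝ) ^ (((d : ℝ) - 1) / 2)) := by
  refine ⟨3, by norm_num, fun F _ _ _ hodd a hsym hdet j hj E hE z => ?_⟩
  have h2 : (2 : F) ≠ 0 := Ring.two_ne_zero fun h => Nat.not_odd_iff_even.mpr even_two (h ▸ hodd)
  have hinj : Function.Injective a.mulVec :=
    mulVec_injective_of_isUnit ((isUnit_iff_isUnit_det a).mpr hdet.isUnit)
  have hbound := card_incidences_le (IsSymm.ext fun i k => hsym k i) hinj h2 hj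
    (fun x hx => mem_Surf_iff.mp (hE hx)) z
  have hq : (0 : ℝ) < Fintype.card F := by positivity
  have hrpow : (Fintype.card F : ℝ) ^ (((d : ℝ) - 1) / 2) =
      √((Fintype.card F : ℝ) ^ d / Fintype.card F) := by
    rw [Real.sqrt_eq_rpow, ← Real.rpow_natCast, ← Real.rpow_sub_one hq.ne', ← Real.rpow_mul hq.le]
    ring_nf
  rw [Fintype.card_fin] at hbound
  simp only [mem_Surf_iff, hrpow, ← div_eq_mul_inv]
  have : (0 : ℝ) ≤ #E ^ 2 / Fintype.card F := by positivity
  linarith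

/-- Incidence theorem: for `E ⊆ S_j` and any `z ∈ F_q^d`, the number of pairs
`(x,y) ∈ E × E` with `x - y + z ∈ S_j` is at most `C((#E)² q⁻¹ + #E q^{(d-1)/2})`. -/
theorem stmt16 (d : ℕ) (hd : 2 ≤ d) :
    ∃ C : ℝ, 0 < C ∧
      ∀ (F : Type) [Field F] [Fintype F] [DecidableEq F],
        Odd (ringChar F) →
        ∀ a : Matrix (Fin d) (Fin d) F, (∀ i k, a i k = a k i) → a.det ≠ 0 →
        ∀ j : F, j ≠ 0 →
        ∀ E : Finset (Fin d → F), E ⊆ Surf a j →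
        ∀ z : Fin d → F,
          (((E ×ˢ E).filter (fun pr => pr.1 - pr.2 + z ∈ Surf a j)).card : ℝ)
            ≤ C * ((E.card : ℝ) ^ 2 * (Fintype.card F : ℝ)⁻¹ +
                (E.card : ℝ) * (Fintype.card F : ℝ) ^ (((d : ℝ) - 1) / 2)) :=
  stmt16_general d
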